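/- Universality: every linearly minimal homomorphism dilation system (π₁, S₁, T₁, W₁) of (φ, A, V) is equivalent to the reduced dilation of the universal dilation (π_u, S, T, A⊗V) by the subspace K = { Σᵢ cᵢ aᵢ ⊗ xᵢ : Σᵢ cᵢ π₁(aᵢ)T₁xᵢ = 0 }; in particular K is a π_u-invariant subspace of ker S and the map R: (A⊗V)/K → W₁, [Σ cᵢ aᵢ⊗xᵢ] ↦ Σ cᵢ π₁(aᵢ)T₁xᵢ, is a well-defined linear isomorphism satisfying π₁(a)R = R π̃_u(a) and R T̃ = T₁. -/
import Mathlib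


open scoped TensorProduct

variable (k : Type*) [Field k] (A : Type*) [Ring A] [Algebra k A]
  (V : Type*) [AddCommGroup V] [Module k V]

/-- The universal homomorphism `π_u(a)(b ⊗ x) = (ab) ⊗ x` on `A ⊗ V`. -/
noncomputable def piU : A →ₐ[k] Module.End k (A ⊗[k] V) where
  toFun a := LinearMap.rTensor V (LinearMap.mulLeft k a)
  map_one' := by ext b v; simp
  map_mul' a b := by ext c v; simp [mul_assoc]
  map_zero' := by ext a v; simp
  map_add' a b := by ext c v; simp [add_mul, TensorProduct.add_tmul]
  commutes' c := by
    ext a v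
    simp [Algebra.algebraMap_eq_smul_one, smul_mul_assoc, TensorProduct.smul_tmul']

/-- The universal analysis operator `T(x) = 1 ⊗ x`. -/
noncomputable def Tu : V →ₗ[k] A ⊗[k] V := TensorProduct.mk k A V 1

/-- The universal synthesis operator `S(a ⊗ x) = φ(a) x`. -/
noncomputable def Su (φ : A →ₗ[k] Module.End k V) : A ⊗[k] V →ₗ[k] V :=
  TensorProduct.lift (φ : A →ₗ[k] V →ₗ[k] V)

/-- The linear map `A ⊗ V → W₁`, `a ⊗ x ↦ π₁(a) T₁ x`; its kernel is the reduced
subspace associated with the dilation system `(π₁, S₁, T₁, W₁)`. -/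
noncomputable def Theta (W₁ : Type*) [AddCommGroup W₁] [Module k W₁]
    (π₁ : A →ₐ[k] Module.End k W₁) (T₁ : V →ₗ[k] W₁) : A ⊗[k] V →ₗ[k] W₁ :=
  TensorProduct.lift ((LinearMap.lcomp k W₁ T₁) ∘ₗ π₁.toLinearMap)

/-- universality: every linearly minimal homomorphism dilation system
`(π₁, S₁, T₁, W₁)` of `(φ, A, V)` is equivalent to the reduced dilation of the universal
dilation `(π_u, S, T, A ⊗ V)` by `K = ker(Σ cᵢ aᵢ ⊗ xᵢ ↦ Σ cᵢ π₁(aᵢ) T₁ xᵢ)`: `K` is a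
`π_u`-invariant subspace of `ker S`, and `[w] ↦ Θ(w)` defines a linear isomorphism
`R : (A ⊗ V)/K ≃ W₁` with `π₁(a) R = R π̃_u(a)`, `R T̃ = T₁` (and `S₁ R = S̃`). -/
theorem universal_dilation_universality (φ : A →ₗ[k] Module.End k V) (hφ : φ 1 = 1)
    (W₁ : Type*) [AddCommGroup W₁] [Module k W₁]
    (π₁ : A →ₐ[k] Module.End k W₁) (T₁ : V →ₗ[k] W₁) (S₁ : W₁ →ₗ[k] V)
    (hT₁ : Function.Injective T₁) (hS₁ : Function.Surjective S₁)
    (hdil₁ : ∀ a : A, (φ a : V →ₗ[k] V) = S₁ ∘ₗ (π₁ a : W₁ →ₗ[k] W₁) ∘ₗ T₁)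
    (hmin₁ : Submodule.span k {w : W₁ | ∃ (a : A) (x : V), w = π₁ a (T₁ x)} = ⊤) :
    LinearMap.ker (Theta k A V W₁ π₁ T₁) ≤ LinearMap.ker (Su k A V φ) ∧
    (∀ a : A, (LinearMap.ker (Theta k A V W₁ π₁ T₁)).map (piU k A V a : A ⊗[k] V →ₗ[k] A ⊗[k] V) ≤
      LinearMap.ker (Theta k A V W₁ π₁ T₁)) ∧
    ∃ R : ((A ⊗[k] V) ⧸ LinearMap.ker (Theta k A V W₁ π₁ T₁)) ≃ₗ[k] W₁,
      (∀ w : A ⊗[k] V, R ((LinearMap.ker (Theta k A V W₁ π₁ T₁)).mkQ w) =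
        Theta k A V W₁ π₁ T₁ w) ∧
      (∀ (a : A) (w : A ⊗[k] V),
        π₁ a (R ((LinearMap.ker (Theta k A V W₁ π₁ T₁)).mkQ w)) =
          R ((LinearMap.ker (Theta k A V W₁ π₁ T₁)).mkQ (piU k A V a w))) ∧
      (∀ x : V, R ((LinearMap.ker (Theta k A V W₁ π₁ T₁)).mkQ (Tu k A V x)) = T₁ x) ∧
      (∀ w : A ⊗[k] V, S₁ (R ((LinearMap.ker (Theta k A V W₁ π₁ T₁)).mkQ w)) =
        Su k A V φ w) := by

  set Θ := Theta k A V W₁ π₁ T₁ with hΘ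
  have hΘ_tmul : ∀ (a : A) (x : V), Θ (a ⊗ₜ[k] x) = π₁ a (T₁ x) := fun a x => rfl
  have hSu : Su k A V φ = S₁ ∘ₗ Θ := by
    apply TensorProduct.ext'
    intro a x
    simp only [Su, TensorProduct.lift.tmul, LinearMap.coe_coe, hdil₁ a,
      LinearMap.comp_apply, hΘ_tmul]
  have hcomm : ∀ a : A, Θ ∘ₗ (piU k A V a : A ⊗[k] V →ₗ[k] A ⊗[k] V)
      = (π₁ a : W₁ →ₗ[k] W₁) ∘ₗ Θ := by
    intro a
    apply TensorProduct.ext'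
    intro b x
    show Θ ((a * b) ⊗ₜ[k] x) = π₁ a (Θ (b ⊗ₜ[k] x))
    rw [hΘ_tmul, hΘ_tmul, map_mul]
    rfl
  have hker : LinearMap.ker Θ ≤ LinearMap.ker (Su k A V φ) := by
    intro w hw
    simp only [LinearMap.mem_ker] at hw ⊢
    rw [hSu, LinearMap.comp_apply, hw, map_zero]
  have hinv : ∀ a : A, (LinearMap.ker Θ).map (piU k A V a : A ⊗[k] V →ₗ[k] A ⊗[k] V)
      ≤ LinearMap.ker Θ := by
    intro a w hw
    obtain ⟨u, hu, rfl⟩ := hw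
    simp only [LinearMap.mem_ker] at hu ⊢
    have := congrArg (fun f => f u) (hcomm a)
    simp only [LinearMap.comp_apply] at this
    rw [this, hu, map_zero]
  have hsurj : Function.Surjective Θ := by
    rw [← LinearMap.range_eq_top, eq_top_iff, ← hmin₁]
    rw [Submodule.span_le]
    rintro w ⟨a, x, rfl⟩
    exact ⟨a ⊗ₜ[k] x, rfl⟩
  refine ⟨hker, hinv, LinearMap.quotKerEquivOfSurjective Θ hsurj, ?_, ?_, ?_, ?_⟩
  · intro w; rfl
  · intro a w
    have hRw : ∀ u : A ⊗[k] V,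
        (LinearMap.quotKerEquivOfSurjective Θ hsurj) ((LinearMap.ker Θ).mkQ u) = Θ u :=
      fun u => rfl
    rw [hRw, hRw]
    have := congrArg (fun f => f w) (hcomm a)
    simpa using this.symm
  · intro x
    have : Θ (Tu k A V x) = π₁ 1 (T₁ x) := rfl
    show Θ (Tu k A V x) = T₁ x
    rw [this, map_one]; rfl
  · intro w
    show S₁ (Θ w) = Su k A V φ w
    rw [hSu]; rfl
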